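/- arXiv:1003.1927 — 4 statements merged into one kernel-verified Lean document; each statement's English description precedes it below -/
import Mathlib

section
/- Let λ₀, b > 0, and let g : [0,b] → ℝ be a bounded measurable density that is continuous at b with g(b) > 0. Then as t → ∞, the integral ∫₀^b g(x)·(e^{tx}-1)/x dx is asymptotically equivalent to (g(b)/b)·e^{bt}/t, i.e., the ratio of the two quantities tends to 1. -/
/-!
Substituting `x = b - u / t` turns `t e^{-bt} ∫₀^b g(x) (e^{tx} - 1) / x dx` into
`∫₀^{bt} g(b - u/t) (e^{-u} - e^{-bt}) / (b - u/t) du`. As `t → ∞` the integrand tends to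
`g(b) e^{-u} / b` for each `u > 0`, and it is dominated by `(2G/b)(1 + u) e^{-u}`: where
`x = b - u/t ≥ b/2` the factor `1/x` is at most `2/b`, and elsewhere `1 - e^{-tx} ≤ tx` with
`t ≤ 2u/b`.
Dominated convergence gives the limit `g(b)/b`.
-/

open Real MeasureTheory Filter Set Topology

lemma one_sub_exp_neg_mul_div_le {b t x : ℝ} (hb : 0 < b) (ht : 0 < t) (hx : 0 < x)
    (hxb : x ≤ b) : (1 - exp (-(t * x))) / x ≤ 2 / b * (1 + t * (b - x)) := by
  rw [div_le_iff₀ hx]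
  have hexp_pos : 0 < exp (-(t * x)) := exp_pos _
  have htbx : 0 ≤ t * (b - x) := mul_nonneg ht.le (sub_nonneg.2 hxb)
  rcases le_or_gt (b / 2) x with hx2 | hx2
  · have : 1 ≤ 2 / b * x := by rw [div_mul_eq_mul_div, le_div_iff₀ hb]; linarith
    nlinarith [mul_nonneg htbx (by positivity : (0 : ℝ) ≤ 2 / b * x)]
  · have : t ≤ 2 / b * (t * (b - x)) := by
      rw [div_mul_eq_mul_div, le_div_iff₀ hb]; nlinarith
    nlinarith [one_sub_le_exp_neg (t * x), mul_le_mul_of_nonneg_right this hx.le,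
      (by positivity : (0 : ℝ) ≤ 2 / b * x)]

lemma exp_neg_sub_exp_neg_div_le {b t u : ℝ} (hb : 0 < b) (ht : 0 < t) (hu : 0 ≤ u)
    (hub : u < b * t) :
    (exp (-u) - exp (-(b * t))) / (b - u / t) ≤ 2 / b * (1 + u) * exp (-u) := by
  set x := b - u / t with hx_def
  have hx : 0 < x := by rw [sub_pos, div_lt_iff₀ ht]; exact hub
  have hu_eq : u = t * (b - x) := by rw [hx_def]; field_simp; ring
  have hbt : exp (-(b * t)) = exp (-u) * exp (-(t * x)) := by
    rw [← exp_add, hu_eq]; ring_nf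
  calc (exp (-u) - exp (-(b * t))) / x = exp (-u) * ((1 - exp (-(t * x))) / x) := by
        rw [hbt]; ring
    _ ≤ exp (-u) * (2 / b * (1 + u)) := by
        gcongr
        rw [hu_eq]
        exact one_sub_exp_neg_mul_div_le hb ht hx (by linarith [div_nonneg hu ht.le])
    _ = 2 / b * (1 + u) * exp (-u) := by ring

lemma integrableOn_one_add_mul_exp_neg_Ioi :
    IntegrableOn (fun u : ℝ => (1 + u) * exp (-u)) (Ioi 0) := by
  refine ((GammaIntegral_convergent one_pos).add (GammaIntegral_convergent two_pos)).congr_fun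
    (fun u _ => ?_) measurableSet_Ioi
  norm_num
  ring

/-- The integrand of `t e^{-bt} ∫₀^b g(x) (e^{tx} - 1) / x dx` after substituting
`x = b - u / t`. -/
noncomputable def rescaledIntegrand (g : ℝ → ℝ) (b t : ℝ) : ℝ → ℝ :=
  (Ioo 0 (b * t)).indicator fun u => g (b - u / t) * (exp (-u) - exp (-(b * t))) / (b - u / t)

lemma setIntegral_rescaledIntegrand (g : ℝ → ℝ) {b t : ℝ} (hb : 0 < b) (ht : 0 < t) :
    ∫ u in Ioi 0, rescaledIntegrand g b t u =
      t * exp (-(b * t)) * ∫ x in 0..b, g x * (exp (t * x) - 1) / x := by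
  set f : ℝ → ℝ := fun x => g x * (exp (t * x) - 1) / x
  have hpoint : ∀ u, g (b - u / t) * (exp (-u) - exp (-(b * t))) / (b - u / t) =
      exp (-(b * t)) * f (b - u / t) := by
    intro u
    have : exp (-(b * t)) * exp (t * (b - u / t)) = exp (-u) := by
      rw [← exp_add]; congr 1; field_simp; ring
    rw [← this]; ring
  rw [rescaledIntegrand, setIntegral_indicator measurableSet_Ioo,
    inter_eq_right.2 Ioo_subset_Ioi_self, ← integral_Ioc_eq_integral_Ioo,
    ← intervalIntegral.integral_of_le (by positivity)]
  simp_rw [hpoint]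
  rw [intervalIntegral.integral_const_mul, intervalIntegral.integral_comp_sub_div f ht.ne',
    mul_div_cancel_right₀ b ht.ne', zero_div, sub_self, sub_zero, smul_eq_mul]
  ring

lemma norm_rescaledIntegrand_le {g : ℝ → ℝ} {b G t u : ℝ} (hb : 0 < b)
    (hbdd : ∀ x ∈ Icc 0 b, |g x| ≤ G) (ht : 0 < t) (hu : 0 < u) :
    ‖rescaledIntegrand g b t u‖ ≤ G * ((1 + u) * exp (-u)) * (2 / b) := by
  have hG : 0 ≤ G := (abs_nonneg _).trans (hbdd b ⟨hb.le, le_rfl⟩)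
  by_cases hmem : u ∈ Ioo 0 (b * t)
  · have hx : 0 < b - u / t := by rw [sub_pos, div_lt_iff₀ ht]; exact hmem.2
    have hkernel : 0 ≤ (exp (-u) - exp (-(b * t))) / (b - u / t) :=
      div_nonneg (sub_nonneg.2 (exp_le_exp.2 (by linarith [hmem.2]))) hx.le
    rw [rescaledIntegrand, indicator_of_mem hmem, Real.norm_eq_abs, mul_div_assoc, abs_mul,
      abs_of_nonneg hkernel]
    calc |g (b - u / t)| * ((exp (-u) - exp (-(b * t))) / (b - u / t))
        ≤ G * (2 / b * (1 + u) * exp (-u)) :=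
          mul_le_mul (hbdd _ ⟨hx.le, by linarith [div_pos hu ht]⟩)
            (exp_neg_sub_exp_neg_div_le hb ht hu.le hmem.2) hkernel hG
      _ = G * ((1 + u) * exp (-u)) * (2 / b) := by ring
  · rw [rescaledIntegrand, indicator_of_notMem hmem, norm_zero]
    positivity

lemma tendsto_rescaledIntegrand {g : ℝ → ℝ} {b u : ℝ} (hb : 0 < b)
    (hcont : ContinuousWithinAt g (Icc 0 b) b) (hu : 0 < u) :
    Tendsto (fun t => rescaledIntegrand g b t u) atTop (𝓝 (g b / b * exp (-u))) := by
  have hlarge : ∀ᶠ t in atTop, u / b < t := eventually_gt_atTop _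
  have hshift : Tendsto (fun t => b - u / t) atTop (𝓝[Icc 0 b] b) := by
    refine tendsto_nhdsWithin_iff.2 ⟨?_, hlarge.mono fun t ht => ?_⟩
    · simpa using tendsto_const_nhds.sub ((tendsto_const_nhds (x := u)).div_atTop tendsto_id)
    · have ht0 : 0 < t := (div_pos hu hb).trans ht
      exact ⟨sub_nonneg.2 ((div_le_iff₀ ht0).2 ((div_lt_iff₀' hb).1 ht).le),
        sub_le_self _ (div_pos hu ht0).le⟩
  have hdecay : Tendsto (fun t => exp (-(b * t))) atTop (𝓝 0) :=
    tendsto_exp_neg_atTop_nhds_zero.comp (tendsto_id.const_mul_atTop hb)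
  have hnum := (hcont.tendsto.comp hshift).mul ((tendsto_const_nhds (x := exp (-u))).sub hdecay)
  have hlim := hnum.div (tendsto_nhdsWithin_iff.1 hshift).1 hb.ne'
  rw [sub_zero, mul_div_right_comm] at hlim
  refine hlim.congr' (hlarge.mono fun t ht => ?_)
  have hmem : u ∈ Ioo 0 (b * t) := ⟨hu, by rwa [div_lt_iff₀' hb] at ht⟩
  simp only [rescaledIntegrand, indicator_of_mem hmem, Function.comp, Pi.div_apply]

theorem tendsto_mul_exp_neg_mul_integral_mul_exp_sub_one_div {g : ℝ → ℝ} {b G : ℝ}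
    (hb : 0 < b) (hmeas : Measurable g) (hbdd : ∀ x ∈ Icc 0 b, |g x| ≤ G)
    (hcont : ContinuousWithinAt g (Icc 0 b) b) :
    Tendsto (fun t => t * exp (-(b * t)) * ∫ x in 0..b, g x * (exp (t * x) - 1) / x) atTop
      (𝓝 (g b / b)) := by
  have hmeas_t : ∀ t, AEStronglyMeasurable (rescaledIntegrand g b t) (volume.restrict (Ioi 0)) :=
    fun t => ((by fun_prop : Measurable fun u =>
      g (b - u / t) * (exp (-u) - exp (-(b * t))) / (b - u / t)).indicator
        measurableSet_Ioo).aestronglyMeasurable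
  have hbound : ∀ᶠ t in atTop, ∀ᵐ u ∂volume.restrict (Ioi 0),
      ‖rescaledIntegrand g b t u‖ ≤ G * ((1 + u) * exp (-u)) * (2 / b) :=
    (eventually_gt_atTop 0).mono fun t ht =>
      (ae_restrict_iff' measurableSet_Ioi).2 (ae_of_all _ fun u hu =>
        norm_rescaledIntegrand_le hb hbdd ht hu)
  have hlim := tendsto_integral_filter_of_dominated_convergence _ (Eventually.of_forall hmeas_t)
    hbound ((integrableOn_one_add_mul_exp_neg_Ioi.const_mul G).mul_const (2 / b))
    ((ae_restrict_iff' measurableSet_Ioi).2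
      (ae_of_all _ fun u hu => tendsto_rescaledIntegrand hb hcont hu))
  rw [integral_const_mul, integral_exp_neg_Ioi_zero, mul_one] at hlim
  exact hlim.congr' ((eventually_gt_atTop 0).mono fun t ht =>
    setIntegral_rescaledIntegrand g hb ht)

theorem stmt_3_general (b G : ℝ) (hb : 0 < b)
    (g : ℝ → ℝ) (hmeas : Measurable g)
    (hbdd : ∀ x ∈ Set.Icc 0 b, 0 ≤ g x ∧ g x ≤ G)
    (hcont : ContinuousWithinAt g (Set.Icc 0 b) b)
    (hgb : 0 < g b) :
    Tendsto (fun t : ℝ =>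
        (∫ x in (0:ℝ)..b, g x * (Real.exp (t * x) - 1) / x) /
          ((g b / b) * Real.exp (b * t) / t))
      atTop (nhds 1) := by
  have habs : ∀ x ∈ Icc 0 b, |g x| ≤ G := fun x hx =>
    (abs_of_nonneg (hbdd x hx).1).trans_le (hbdd x hx).2
  have hlim := (tendsto_mul_exp_neg_mul_integral_mul_exp_sub_one_div hb hmeas habs hcont).div_const
    (g b / b)
  rw [div_self (by positivity)] at hlim
  refine hlim.congr' ((eventually_gt_atTop 0).mono fun t ht => ?_)
  rw [exp_neg]
  field_simp

theorem stmt_3 (lam0 b G : ℝ) (hlam0 : 0 < lam0) (hb : 0 < b)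
    (g : ℝ → ℝ) (hmeas : Measurable g)
    (hbdd : ∀ x ∈ Set.Icc 0 b, 0 ≤ g x ∧ g x ≤ G)
    (hcont : ContinuousWithinAt g (Set.Icc 0 b) b)
    (hgb : 0 < g b) :
    Tendsto (fun t : ℝ =>
        (∫ x in (0:ℝ)..b, g x * (Real.exp (t * x) - 1) / x) /
          ((g b / b) * Real.exp (b * t) / t))
      atTop (nhds 1) :=
  stmt_3_general b G hb g hmeas hbdd hcont hgb
end

section
/- Let λ₀, b, V₀, u₁ > 0 and let g be a density on [0,b], bounded, continuous at b with g(b) > 0. Define E(t) = u₁·V₀·e^{λ₀ t} ∫₀^b g(x)·(e^{tx}-1)/x dx (the mean number of type-1 cells at time t). Then E(t) ∼ (V₀·u₁·g(b)/(b·t))·e^{(λ₀+b)t} as t → ∞. -/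
/-!
After multiplication by `t e^{-bt}`, split `∫₀^b g(x)(e^{tx} - 1)/x dx` at `b/2`. On `[0, b/2]` the
integrand is at most `G t e^{tb/2}`, negligible against `e^{bt}/t`. On `[b/2, b]` it equals
`(g(x)/x) e^{tx} - g(x)/x` with `g(x)/x` bounded, so only the Laplace integral `∫ f(x) e^{tx} dx`
with `f = g/x` matters. The substitution `x = b - v/t` turns `t ∫ₐᵇ f(x) e^{t(x-b)} dx` into
`∫₀^{t(b-a)} f(b - v/t) e^{-v} dv`, which tends to `f(b) ∫₀^∞ e^{-v} dv = f(b)` by dominated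
convergence. Hence `t e^{-bt} ∫₀^b g(x)(e^{tx} - 1)/x dx → g(b)/b`, and `e^{λ₀t}` cancels.
-/

open Real MeasureTheory Filter Set
open scoped Topology

lemma intervalIntegrable_of_abs_le {f : ℝ → ℝ} {a b M : ℝ} (hf : Measurable f)
    (hM : ∀ x ∈ uIcc a b, |f x| ≤ M) : IntervalIntegrable f volume a b :=
  intervalIntegrable_const.mono_fun' hf.aestronglyMeasurable <| by
    filter_upwards [ae_restrict_mem measurableSet_uIoc] with x hx
    exact hM x (uIoc_subset_uIcc hx)

lemma mul_integral_mul_exp_mul_sub_eq (f : ℝ → ℝ) {a b t : ℝ} (hab : a ≤ b) (ht : 0 < t) :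
    t * ∫ x in a..b, f x * exp (t * (x - b)) =
      ∫ v in Ioi 0, (Ioc 0 (t * (b - a))).indicator (fun v => f (b - v / t) * exp (-v)) v := by
  set h : ℝ → ℝ := fun u => f (b - u) * exp (-(t * u))
  have hv : ∀ v, f (b - v / t) * exp (-v) = h (v / t) := fun v => by
    simp only [h, mul_div_cancel₀ _ ht.ne']
  have hx : ∀ u, h u = f (b - u) * exp (t * (b - u - b)) := fun u => by
    simp only [h]; ring_nf
  rw [setIntegral_indicator measurableSet_Ioc,
    inter_eq_self_of_subset_right Ioc_subset_Ioi_self,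
    ← intervalIntegral.integral_of_le (by nlinarith), funext hv,
    intervalIntegral.integral_comp_div h ht.ne', zero_div, mul_div_cancel_left₀ _ ht.ne',
    smul_eq_mul, funext hx,
    intervalIntegral.integral_comp_sub_left (fun x => f x * exp (t * (x - b))), sub_zero,
    sub_sub_cancel]

theorem tendsto_mul_integral_mul_exp_mul_sub {f : ℝ → ℝ} {a b M : ℝ} (hab : a < b)
    (hf : Measurable f) (hM : ∀ x ∈ Icc a b, |f x| ≤ M)
    (hfb : ContinuousWithinAt f (Icc a b) b) :
    Tendsto (fun t => t * ∫ x in a..b, f x * exp (t * (x - b))) atTop (𝓝 (f b)) := by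
  have hM0 : 0 ≤ M := (abs_nonneg _).trans (hM b ⟨hab.le, le_rfl⟩)
  have hIcc : ∀ t > 0, ∀ v ∈ Ioc 0 (t * (b - a)), b - v / t ∈ Icc a b := by
    intro t ht v hv
    have : v / t ≤ b - a := (div_le_iff₀ ht).2 (by linarith [hv.2])
    exact ⟨by linarith, by linarith [div_pos hv.1 ht]⟩
  have hlim : Tendsto (fun t => ∫ v in Ioi 0,
      (Ioc 0 (t * (b - a))).indicator (fun v => f (b - v / t) * exp (-v)) v)
      atTop (𝓝 (∫ v in Ioi 0, f b * exp (-v))) := by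
    refine tendsto_integral_filter_of_dominated_convergence (fun v => M * exp (-v)) ?_ ?_ ?_ ?_
    · refine Eventually.of_forall fun t =>
        (Measurable.indicator ?_ measurableSet_Ioc).aestronglyMeasurable
      fun_prop
    · filter_upwards [eventually_gt_atTop 0] with t ht
      refine Eventually.of_forall fun v => ?_
      by_cases hv : v ∈ Ioc 0 (t * (b - a))
      · rw [indicator_of_mem hv, norm_mul, norm_of_nonneg (exp_pos _).le]
        exact mul_le_mul_of_nonneg_right (hM _ (hIcc t ht v hv)) (exp_pos _).le
      · rw [indicator_of_notMem hv, norm_zero]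
        positivity
    · simpa using (exp_neg_integrableOn_Ioi 0 one_pos).const_mul M
    · filter_upwards [ae_restrict_mem measurableSet_Ioi] with v (hv : 0 < v)
      have hmem : ∀ᶠ t in atTop, 0 < t ∧ v ∈ Ioc 0 (t * (b - a)) :=
        (eventually_gt_atTop 0).and <|
          ((tendsto_id.atTop_mul_const (sub_pos.2 hab)).eventually_ge_atTop v).mono
            fun t ht => ⟨hv, ht⟩
      have hshift : Tendsto (fun t => b - v / t) atTop (𝓝[Icc a b] b) := by
        refine tendsto_nhdsWithin_iff.2 ⟨?_, hmem.mono fun t ht => hIcc t ht.1 v ht.2⟩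
        simpa using (tendsto_const_nhds (x := b)).sub
          ((tendsto_const_nhds (x := v)).div_atTop tendsto_id)
      refine ((hfb.tendsto.comp hshift).mul_const _).congr' ?_
      filter_upwards [hmem] with t ht
      rw [indicator_of_mem ht.2]
      rfl
  rw [integral_const_mul, integral_exp_neg_Ioi_zero, mul_one] at hlim
  refine hlim.congr' ?_
  filter_upwards [eventually_gt_atTop 0] with t ht
  exact (mul_integral_mul_exp_mul_sub_eq f hab.le ht).symm

lemma exp_sub_one_le_mul_exp (s : ℝ) : exp s - 1 ≤ s * exp s := by
  have h := add_one_le_exp (-s)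
  have : exp (-s) * exp s = 1 := by rw [← exp_add, neg_add_cancel, exp_zero]
  nlinarith [exp_pos s]

lemma abs_exp_mul_sub_one_div_le {t x : ℝ} (ht : 0 ≤ t) (hx : 0 ≤ x) :
    |(exp (t * x) - 1) / x| ≤ t * exp (t * x) := by
  rcases hx.eq_or_lt with rfl | hx
  · simp only [div_zero, abs_zero]; positivity
  rw [abs_of_nonneg (div_nonneg (sub_nonneg.2 (one_le_exp (by positivity))) hx.le),
    div_le_iff₀ hx]
  linarith [exp_sub_one_le_mul_exp (t * x)]

lemma abs_mul_exp_mul_sub_one_div_le {g : ℝ → ℝ} {c G t x : ℝ} (ht : 0 ≤ t)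
    (hx : x ∈ Icc 0 c) (hG : |g x| ≤ G) :
    |g x * (exp (t * x) - 1) / x| ≤ G * (t * exp (t * c)) := by
  rw [mul_div_assoc, abs_mul]
  refine mul_le_mul hG ((abs_exp_mul_sub_one_div_le ht hx.1).trans ?_) (abs_nonneg _)
    ((abs_nonneg _).trans hG)
  gcongr
  exact hx.2

lemma tendsto_mul_exp_neg_mul_integral_mul_exp_mul_sub_one_div_of_lt {g : ℝ → ℝ} {b c G : ℝ}
    (hc : 0 ≤ c) (hcb : c < b) (hG : ∀ x ∈ Icc 0 c, |g x| ≤ G) :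
    Tendsto (fun t => t * exp (-(b * t)) * ∫ x in 0..c, g x * (exp (t * x) - 1) / x)
      atTop (𝓝 0) := by
  have hdecay :
      Tendsto (fun t : ℝ => G * c * (t ^ (2 : ℝ) * exp (-(b - c) * t))) atTop (𝓝 0) := by
    simpa using
      (tendsto_rpow_mul_exp_neg_mul_atTop_nhds_zero 2 (b - c) (sub_pos.2 hcb)).const_mul (G * c)
  refine squeeze_zero_norm' ?_ hdecay
  filter_upwards [eventually_ge_atTop 0] with t ht
  have hbound :
      ‖∫ x in 0..c, g x * (exp (t * x) - 1) / x‖ ≤ G * (t * exp (t * c)) * |c - 0| :=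
    intervalIntegral.norm_integral_le_of_norm_le_const fun x hx =>
      abs_mul_exp_mul_sub_one_div_le ht (Ioc_subset_Icc_self (uIoc_of_le hc ▸ hx))
        (hG x (Ioc_subset_Icc_self (uIoc_of_le hc ▸ hx)))
  rw [sub_zero, abs_of_nonneg hc] at hbound
  have hexp : exp (-(b * t)) * exp (t * c) = exp (-(b - c) * t) := by
    rw [← exp_add]; ring_nf
  rw [norm_mul, norm_mul, norm_of_nonneg ht, norm_of_nonneg (exp_pos _).le, rpow_two]
  calc t * exp (-(b * t)) * ‖∫ x in 0..c, g x * (exp (t * x) - 1) / x‖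
      ≤ t * exp (-(b * t)) * (G * (t * exp (t * c)) * c) := by gcongr
    _ = G * c * (t ^ 2 * exp (-(b - c) * t)) := by rw [← hexp]; ring

theorem tendsto_mul_exp_neg_mul_integral_mul_exp_mul_sub_one_div {g : ℝ → ℝ} {b G : ℝ}
    (hb : 0 < b) (hg : Measurable g) (hG : ∀ x ∈ Icc 0 b, |g x| ≤ G)
    (hgb : ContinuousWithinAt g (Icc 0 b) b) :
    Tendsto (fun t => t * exp (-(b * t)) * ∫ x in 0..b, g x * (exp (t * x) - 1) / x)
      atTop (𝓝 (g b / b)) := by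
  have hc : 0 < b / 2 := half_pos hb
  have hcb : b / 2 < b := half_lt_self hb
  have hG' : ∀ x ∈ Icc (b / 2) b, |g x / x| ≤ G / (b / 2) := fun x hx => by
    rw [abs_div, abs_of_pos (hc.trans_le hx.1)]
    exact div_le_div₀ ((abs_nonneg _).trans (hG b ⟨hb.le, le_rfl⟩))
      (hG x ⟨hc.le.trans hx.1, hx.2⟩) hc hx.1
  have hinit := tendsto_mul_exp_neg_mul_integral_mul_exp_mul_sub_one_div_of_lt hc.le hcb
    fun x hx => hG x ⟨hx.1, hx.2.trans hcb.le⟩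
  have hpeak :=
    tendsto_mul_integral_mul_exp_mul_sub (f := fun x => g x / x) hcb (by fun_prop) hG'
    ((hgb.div continuousWithinAt_id hb.ne').mono (Icc_subset_Icc_left hc.le))
  have hconst :
      Tendsto (fun t => t * exp (-(b * t)) * ∫ x in b / 2..b, g x / x) atTop (𝓝 0) := by
    simpa using (tendsto_rpow_mul_exp_neg_mul_atTop_nhds_zero 1 b hb).mul_const
      (∫ x in b / 2..b, g x / x)
  have hsum := hinit.add (hpeak.sub hconst)
  rw [zero_add, sub_zero] at hsum
  refine hsum.congr' ?_
  filter_upwards [eventually_gt_atTop 0] with t ht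
  have hF : IntervalIntegrable (fun x => g x * (exp (t * x) - 1) / x) volume 0 b :=
    intervalIntegrable_of_abs_le (by fun_prop) fun x hx =>
      abs_mul_exp_mul_sub_one_div_le ht.le (uIcc_of_le hb.le ▸ hx)
        (hG x (uIcc_of_le hb.le ▸ hx))
  have hquot : IntervalIntegrable (fun x => g x / x) volume (b / 2) b :=
    intervalIntegrable_of_abs_le (hg.div measurable_id) fun x hx =>
      hG' x (uIcc_of_le hcb.le ▸ hx)
  have hpeak_int : IntervalIntegrable (fun x => g x / x * exp (t * (x - b))) volume (b / 2) b :=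
    hquot.mul_continuousOn (by fun_prop)
  have htail : ∫ x in b / 2..b, g x * (exp (t * x) - 1) / x =
      exp (b * t) * (∫ x in b / 2..b, g x / x * exp (t * (x - b))) -
        ∫ x in b / 2..b, g x / x := by
    rw [← intervalIntegral.integral_const_mul, ← intervalIntegral.integral_sub
      (hpeak_int.const_mul _) hquot]
    refine intervalIntegral.integral_congr fun x _ => ?_
    rw [mul_left_comm, ← exp_add, show b * t + t * (x - b) = t * x by ring]
    ring
  rw [← intervalIntegral.integral_add_adjacent_intervals
    (hF.mono_set (uIcc_subset_uIcc_left (mem_uIcc_of_le hc.le hcb.le)))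
    (hF.mono_set (uIcc_subset_uIcc_right (mem_uIcc_of_le hc.le hcb.le))), htail,
    exp_neg]
  field_simp

theorem stmt_5_general (lam0 b V0 u1 G : ℝ) (hb : 0 < b)
    (hV0 : 0 < V0) (hu1 : 0 < u1)
    (g : ℝ → ℝ) (hmeas : Measurable g)
    (hbdd : ∀ x ∈ Set.Icc 0 b, 0 ≤ g x ∧ g x ≤ G)
    (hcont : ContinuousWithinAt g (Set.Icc 0 b) b)
    (hgb : 0 < g b) :
    Tendsto (fun t : ℝ =>
        (u1 * V0 * Real.exp (lam0 * t) *
            ∫ x in (0:ℝ)..b, g x * (Real.exp (t * x) - 1) / x) /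
          ((V0 * u1 * g b / (b * t)) * Real.exp ((lam0 + b) * t)))
      atTop (nhds 1) := by
  have hasymp := tendsto_mul_exp_neg_mul_integral_mul_exp_mul_sub_one_div hb hmeas
    (fun x hx => abs_of_nonneg (hbdd x hx).1 ▸ (hbdd x hx).2) hcont
  have hlim := hasymp.mul_const (b / g b)
  rw [div_mul_div_cancel₀ hb.ne', div_self hgb.ne'] at hlim
  refine hlim.congr' ?_
  filter_upwards [eventually_gt_atTop 0] with t ht
  rw [add_mul, exp_add, exp_neg]
  field_simp

theorem stmt_5 (lam0 b V0 u1 G : ℝ) (hlam0 : 0 < lam0) (hb : 0 < b)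
    (hV0 : 0 < V0) (hu1 : 0 < u1)
    (g : ℝ → ℝ) (hmeas : Measurable g)
    (hbdd : ∀ x ∈ Set.Icc 0 b, 0 ≤ g x ∧ g x ≤ G)
    (hdens : ∫ x in (0:ℝ)..b, g x = 1)
    (hcont : ContinuousWithinAt g (Set.Icc 0 b) b)
    (hgb : 0 < g b) :
    Tendsto (fun t : ℝ =>
        (u1 * V0 * Real.exp (lam0 * t) *
            ∫ x in (0:ℝ)..b, g x * (Real.exp (t * x) - 1) / x) /
          ((V0 * u1 * g b / (b * t)) * Real.exp ((lam0 + b) * t)))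
      atTop (nhds 1) :=
  stmt_5_general lam0 b V0 u1 G hb hV0 hu1 g hmeas hbdd hcont hgb
end

section
/- Fix an integer k ≥ 1, λ₀, b, V₀, G > 0, rates u₁,…,u_k > 0, and g ≤ G on [0,b]. Let b_t = b - (2k+1)(log t)/t. The contribution to EZ_k(t) from fitness vectors (x₁,…,x_k) with some x_i ≤ b_t is at most t^k V₀ u₁⋯u_k G^k ∫ e^{(λ₀+x₁+⋯+x_k)t} dx over that region, which is o(t^{-2k} e^{(λ₀+kb)t}) as t → ∞. -/
/-! The inner time integral runs over a subset of the cube `[0, t]^k`, on which its integrand is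
at most `exp ((λ₀ + ∑ xᵢ) t)`; this gives the factor `t^k`, and `g ≤ G` gives `G^k`.
The region where some `xᵢ ≤ c` is covered by the `k` boxes `[0, b]^(k-1) × [0, c]`; on each box
the exponential integral factorises and is at most `exp ((λ₀ + (k - 1) b + c) t) / t^k`.
For `c = b - (2k+1) log t / t` this is `exp ((λ₀ + k b) t) / t^(3k+1)`, so the contribution,
normalised by `t^(2k) exp (-(λ₀ + k b) t)`, is `O(1/t)`. -/

open Real MeasureTheory Filter Set

theorem setIntegral_le_sum_of_subset_iUnion {α ι : Type*} [MeasurableSpace α] {μ : Measure α}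
    [Fintype ι] {s : Set α} {A : ι → Set α} {f : α → ℝ} (hf : 0 ≤ f)
    (hA : ∀ i, IntegrableOn f (A i) μ) (hs : s ⊆ ⋃ i, A i) :
    ∫ x in s, f x ∂μ ≤ ∑ i, ∫ x in A i, f x ∂μ := by
  have hle : μ.restrict s ≤ ∑ i, μ.restrict (A i) :=
    (Measure.restrict_mono_set μ hs).trans
      (Measure.restrict_iUnion_le.trans_eq (Measure.sum_fintype _))
  calc ∫ x in s, f x ∂μ ≤ ∫ x, f x ∂(∑ i, μ.restrict (A i)) :=
        integral_mono_measure hle (Eventually.of_forall hf)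
          (integrable_finsetSum_measure.2 fun i _ => hA i)
    _ = ∑ i, ∫ x in A i, f x ∂μ := integral_finsetSum_measure fun i _ => hA i

theorem setIntegral_Icc_exp_mul_le {a t : ℝ} (ha : 0 ≤ a) (ht : 0 < t) :
    ∫ y in Icc 0 a, exp (y * t) ≤ exp (a * t) / t := by
  rw [integral_Icc_eq_integral_Ioc, ← intervalIntegral.integral_of_le ha,
    intervalIntegral.integral_comp_mul_right exp ht.ne', integral_exp, zero_mul, exp_zero,
    smul_eq_mul, inv_mul_eq_div]
  gcongr
  linarith

theorem exp_sub_mul_log_div_mul {a t : ℝ} (ht : 0 < t) (m : ℕ) :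
    exp ((a - m * log t / t) * t) = exp (a * t) / t ^ m := by
  rw [sub_mul, div_mul_cancel₀ _ ht.ne', exp_sub, ← log_pow, exp_log (pow_pos ht m)]

section Box

open Fintype

variable {ι : Type*} [Fintype ι]

theorem sum_update_const [DecidableEq ι] (b c : ℝ) (i : ι) :
    ∑ j, Function.update (fun _ => b) i c j = card ι * b - (b - c) := by
  rw [Finset.sum_update_of_mem (Finset.mem_univ i), Finset.sum_const, nsmul_eq_mul,
    Finset.card_sdiff, Finset.card_univ, Finset.inter_univ, Finset.card_singleton,
    Nat.cast_sub (Fintype.card_pos_iff.2 ⟨i⟩)]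
  push_cast
  ring

theorem measurableSet_Icc_exists_le (b c : ℝ) :
    MeasurableSet {x : ι → ℝ | x ∈ Icc 0 (fun _ => b) ∧ ∃ i, x i ≤ c} := by
  have h : MeasurableSet (⋃ i, {x : ι → ℝ | x i ≤ c}) :=
    .iUnion fun i => measurableSet_le (measurable_pi_apply i) measurable_const
  rw [← ofPred_exists] at h
  exact measurableSet_Icc.inter h

theorem setIntegral_Icc_prod_eq_prod (a b : ι → ℝ) (f : ℝ → ℝ) :
    ∫ x in Icc a b, ∏ i, f (x i) = ∏ i, ∫ y in Icc (a i) (b i), f y := by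
  rw [← pi_univ_Icc, volume_pi, Measure.restrict_pi_pi, integral_fintype_prod_eq_prod]

theorem setIntegral_Icc_exp_sum_le {a : ι → ℝ} {t : ℝ} (ha : 0 ≤ a) (ht : 0 < t) :
    ∫ x in Icc 0 a, exp ((∑ i, x i) * t) ≤ exp ((∑ i, a i) * t) / t ^ card ι := by
  simp_rw [Finset.sum_mul, exp_sum]
  rw [setIntegral_Icc_prod_eq_prod 0 a (fun y => exp (y * t)), ← Finset.card_univ,
    ← Finset.prod_const, ← Finset.prod_div_distrib]
  exact Finset.prod_le_prod
    (fun i _ => setIntegral_nonneg measurableSet_Icc fun y _ => (exp_pos _).le)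
    fun i _ => setIntegral_Icc_exp_mul_le (ha i) ht

theorem setIntegral_exp_sum_le_of_exists_le (lam0 : ℝ) {b c t : ℝ} (hb : 0 ≤ b) (hc : 0 ≤ c)
    (ht : 0 < t) :
    ∫ x in {x : ι → ℝ | x ∈ Icc 0 (fun _ => b) ∧ ∃ i, x i ≤ c},
        exp ((lam0 + ∑ i, x i) * t)
      ≤ card ι * exp ((lam0 + card ι * b - (b - c)) * t) / t ^ card ι := by
  classical
  have hcorner : ∀ i : ι, 0 ≤ Function.update (fun _ : ι => b) i c := by
    intro i j
    by_cases h : j = i <;> simp [h, hb, hc]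
  have hcover : {x : ι → ℝ | x ∈ Icc 0 (fun _ => b) ∧ ∃ i, x i ≤ c}
      ⊆ ⋃ i, Icc 0 (Function.update (fun _ => b) i c) := by
    rintro x ⟨hx, i, hxi⟩
    refine mem_iUnion.2 ⟨i, hx.1, fun j => ?_⟩
    by_cases h : j = i
    · subst h; simpa using hxi
    · simpa [h] using hx.2 j
  have hsplit (x : ι → ℝ) :
      exp ((lam0 + ∑ i, x i) * t) = exp (lam0 * t) * exp ((∑ i, x i) * t) := by
    rw [add_mul, exp_add]
  calc _ ≤ ∑ i, ∫ x in Icc 0 (Function.update (fun _ => b) i c),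
            exp ((lam0 + ∑ i, x i) * t) :=
        setIntegral_le_sum_of_subset_iUnion (fun _ => (exp_pos _).le)
          (fun i => (by fun_prop : Continuous _).integrableOn_Icc) hcover
    _ ≤ ∑ i, exp (lam0 * t) *
          (exp ((∑ j, Function.update (fun _ => b) i c j) * t) / t ^ card ι) := by
        gcongr with i
        simp_rw [hsplit, integral_const_mul]
        gcongr
        exact setIntegral_Icc_exp_sum_le (hcorner i) ht
    _ = _ := by
        simp_rw [sum_update_const, ← mul_div_assoc, ← exp_add]
        rw [Finset.sum_const, Finset.card_univ, nsmul_eq_mul]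
        ring_nf

theorem setIntegral_exp_le_of_subset_Icc {S : Set (ι → ℝ)} {t : ℝ} (ht : 0 ≤ t)
    (hS : S ⊆ Icc 0 (fun _ => t)) (lam0 : ℝ) {x : ι → ℝ} (hx : 0 ≤ x) :
    ∫ s in S, exp (lam0 * t + ∑ i, x i * (t - s i))
      ≤ t ^ card ι * exp ((lam0 + ∑ i, x i) * t) := by
  have hvol : volume.real S ≤ t ^ card ι := by
    calc volume.real S ≤ volume.real (Icc (0 : ι → ℝ) (fun _ => t)) :=
          measureReal_mono hS (by simp [volume_Icc_pi])
      _ = t ^ card ι := by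
        rw [measureReal_def, volume_Icc_pi_toReal (a := 0) (fun _ => ht)]
        simp
  have hbound : ∀ s ∈ S, ‖exp (lam0 * t + ∑ i, x i * (t - s i))‖
      ≤ exp ((lam0 + ∑ i, x i) * t) := by
    intro s hs
    rw [norm_of_nonneg (exp_pos _).le, exp_le_exp, add_mul, Finset.sum_mul]
    gcongr with i
    · exact hx i
    · linarith [show 0 ≤ s i from (hS hs).1 i]
  calc _ ≤ exp ((lam0 + ∑ i, x i) * t) * volume.real S :=
        (le_abs_self _).trans (norm_setIntegral_le_of_norm_le_const
          ((measure_mono hS).trans_lt (by simp [volume_Icc_pi])) hbound)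
    _ ≤ t ^ card ι * exp ((lam0 + ∑ i, x i) * t) := by
        rw [mul_comm]; gcongr

variable {X S : Set (ι → ℝ)} {b t G : ℝ} (g : ℝ → ℝ)

theorem setIntegral_prod_mul_setIntegral_exp_nonneg (hg : ∀ y ∈ Icc 0 b, 0 ≤ g y)
    (hX : MeasurableSet X) (hXb : X ⊆ Icc 0 (fun _ => b)) (lam0 : ℝ) :
    0 ≤ ∫ x in X, (∏ i, g (x i)) * ∫ s in S, exp (lam0 * t + ∑ i, x i * (t - s i)) :=
  setIntegral_nonneg hX fun _ hx =>
    mul_nonneg (Finset.prod_nonneg fun i _ => hg _ ⟨(hXb hx).1 i, (hXb hx).2 i⟩)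
      (integral_nonneg fun _ => (exp_pos _).le)

theorem setIntegral_prod_mul_setIntegral_exp_le (hg : ∀ y ∈ Icc 0 b, 0 ≤ g y ∧ g y ≤ G)
    (hX : MeasurableSet X) (hXb : X ⊆ Icc 0 (fun _ => b)) (ht : 0 ≤ t)
    (hS : S ⊆ Icc 0 (fun _ => t)) (lam0 : ℝ) :
    ∫ x in X, (∏ i, g (x i)) * ∫ s in S, exp (lam0 * t + ∑ i, x i * (t - s i))
      ≤ t ^ card ι * G ^ card ι * ∫ x in X, exp ((lam0 + ∑ i, x i) * t) := by
  have hmem : ∀ x ∈ X, ∀ i, x i ∈ Icc 0 b := fun x hx i => ⟨(hXb hx).1 i, (hXb hx).2 i⟩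
  have hcont : Continuous fun x : ι → ℝ => exp ((lam0 + ∑ i, x i) * t) := by fun_prop
  rw [← integral_const_mul]
  refine integral_mono_of_nonneg ?_ ((continuous_const.mul hcont).integrableOn_Icc.mono_set hXb)
    (ae_restrict_of_forall_mem hX fun x hx => ?_)
  · exact ae_restrict_of_forall_mem hX fun x hx =>
      mul_nonneg (Finset.prod_nonneg fun i _ => (hg _ (hmem x hx i)).1)
        (integral_nonneg fun _ => (exp_pos _).le)
  have hprod : ∏ i, g (x i) ≤ G ^ card ι := by
    rw [← Finset.card_univ, ← Finset.prod_const]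
    exact Finset.prod_le_prod (fun i _ => (hg _ (hmem x hx i)).1)
      fun i _ => (hg _ (hmem x hx i)).2
  calc _ ≤ G ^ card ι * (t ^ card ι * exp ((lam0 + ∑ i, x i) * t)) :=
        mul_le_mul hprod (setIntegral_exp_le_of_subset_Icc ht hS lam0 fun i => (hmem x hx i).1)
          (integral_nonneg fun _ => (exp_pos _).le)
          ((Finset.prod_nonneg fun i _ => (hg _ (hmem x hx i)).1).trans hprod)
    _ = _ := by ring

theorem setIntegral_tail_le (hg : ∀ y ∈ Icc 0 b, 0 ≤ g y ∧ g y ≤ G) (hG : 0 ≤ G)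
    (hb : 0 ≤ b) (ht : 0 < t) (hS : S ⊆ Icc 0 (fun _ => t)) (lam0 : ℝ) {m : ℕ}
    (hm : m * log t / t ≤ b) :
    ∫ x in {x : ι → ℝ | x ∈ Icc 0 (fun _ => b) ∧ ∃ i, x i ≤ b - m * log t / t},
        (∏ i, g (x i)) * ∫ s in S, exp (lam0 * t + ∑ i, x i * (t - s i))
      ≤ card ι * G ^ card ι * exp ((lam0 + card ι * b) * t) / t ^ m := by
  calc _ ≤ t ^ card ι * G ^ card ι * (card ι *
          exp ((lam0 + card ι * b - m * log t / t) * t) / t ^ card ι) :=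
        (setIntegral_prod_mul_setIntegral_exp_le g hg (measurableSet_Icc_exists_le _ _)
          (fun x hx => hx.1) ht.le hS lam0).trans (by
            grw [setIntegral_exp_sum_le_of_exists_le lam0 hb (sub_nonneg.2 hm) ht,
              sub_sub_cancel])
    _ = _ := by
        rw [exp_sub_mul_log_div_mul ht]
        field_simp

end Box

theorem stmt_8_general (k : ℕ) (lam0 b V0 G : ℝ)
    (hb : 0 < b) (hV0 : 0 < V0) (hG : 0 < G)
    (u : Fin k → ℝ) (hu : ∀ i, 0 < u i)
    (g : ℝ → ℝ)
    (hbdd : ∀ x ∈ Set.Icc 0 b, 0 ≤ g x ∧ g x ≤ G) :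
    (∀ᶠ t : ℝ in atTop,
        (V0 * (∏ i, u i) *
            ∫ x in {x : Fin k → ℝ | x ∈ Set.Icc (0 : Fin k → ℝ) (fun _ => b) ∧
                ∃ i, x i ≤ b - (2 * k + 1) * Real.log t / t},
              (∏ i, g (x i)) *
                ∫ s in {s : Fin k → ℝ | (∀ i, s i ∈ Set.Icc (0:ℝ) t) ∧ Monotone s},
                  Real.exp (lam0 * t + ∑ i, x i * (t - s i)))
          ≤ t ^ k * V0 * (∏ i, u i) * G ^ k *
              ∫ x in {x : Fin k → ℝ | x ∈ Set.Icc (0 : Fin k → ℝ) (fun _ => b) ∧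
                  ∃ i, x i ≤ b - (2 * k + 1) * Real.log t / t},
                Real.exp ((lam0 + ∑ i, x i) * t)) ∧
      Tendsto (fun t : ℝ =>
          (t ^ (2 * k) * Real.exp (-(lam0 + k * b) * t)) *
            (V0 * (∏ i, u i) *
              ∫ x in {x : Fin k → ℝ | x ∈ Set.Icc (0 : Fin k → ℝ) (fun _ => b) ∧
                  ∃ i, x i ≤ b - (2 * k + 1) * Real.log t / t},
                (∏ i, g (x i)) *
                  ∫ s in {s : Fin k → ℝ | (∀ i, s i ∈ Set.Icc (0:ℝ) t) ∧ Monotone s},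
                    Real.exp (lam0 * t + ∑ i, x i * (t - s i))))
        atTop (nhds 0) := by
  have hVu : 0 ≤ V0 * ∏ i, u i := mul_nonneg hV0.le (Finset.prod_nonneg fun i _ => (hu i).le)
  have hsimplex (t : ℝ) :
      {s : Fin k → ℝ | (∀ i, s i ∈ Icc 0 t) ∧ Monotone s} ⊆ Icc 0 (fun _ => t) :=
    fun s hs => ⟨fun i => (hs.1 i).1, fun i => (hs.1 i).2⟩
  refine ⟨(eventually_ge_atTop 0).mono fun t ht => ?_, ?_⟩
  · have h := setIntegral_prod_mul_setIntegral_exp_le g hbdd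
      (measurableSet_Icc_exists_le b (b - (2 * k + 1) * log t / t)) (fun x hx => hx.1) ht
      (hsimplex t) lam0
    rw [Fintype.card_fin] at h
    exact (mul_le_mul_of_nonneg_left h hVu).trans_eq (by ring)
  have hm : 2 * (k : ℝ) + 1 = ((2 * k + 1 : ℕ) : ℝ) := by push_cast; ring
  have hL : Tendsto (fun t => (2 * (k : ℝ) + 1) * log t / t) atTop (nhds 0) := by
    simpa [mul_div_assoc] using
      (isLittleO_log_id_atTop.tendsto_div_nhds_zero).const_mul (2 * (k : ℝ) + 1)
  refine squeeze_zero' ?_ ?_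
    ((tendsto_const_nhds (x := k * V0 * (∏ i, u i) * G ^ k)).div_atTop tendsto_id)
  · filter_upwards [eventually_ge_atTop 0] with t ht
    exact mul_nonneg (by positivity) (mul_nonneg hVu (setIntegral_prod_mul_setIntegral_exp_nonneg
      g (fun y hy => (hbdd y hy).1) (measurableSet_Icc_exists_le _ _) (fun x hx => hx.1) lam0))
  filter_upwards [eventually_gt_atTop 0, hL.eventually (ge_mem_nhds hb)] with t ht hLb
  rw [hm] at hLb ⊢
  have h := setIntegral_tail_le g hbdd hG.le hb.le ht (hsimplex t) lam0 hLb
  rw [Fintype.card_fin] at h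
  calc _ ≤ t ^ (2 * k) * exp (-(lam0 + k * b) * t) *
          (V0 * (∏ i, u i) * (k * G ^ k * exp ((lam0 + k * b) * t) / t ^ (2 * k + 1))) := by
        gcongr
    _ = k * V0 * (∏ i, u i) * G ^ k / t := by
        rw [neg_mul, exp_neg, pow_succ]
        field_simp

theorem stmt_8 (k : ℕ) (hk : 1 ≤ k) (lam0 b V0 G : ℝ)
    (hlam0 : 0 < lam0) (hb : 0 < b) (hV0 : 0 < V0) (hG : 0 < G)
    (u : Fin k → ℝ) (hu : ∀ i, 0 < u i)
    (g : ℝ → ℝ) (hmeas : Measurable g)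
    (hbdd : ∀ x ∈ Set.Icc 0 b, 0 ≤ g x ∧ g x ≤ G) :
    (∀ᶠ t : ℝ in atTop,
        (V0 * (∏ i, u i) *
            ∫ x in {x : Fin k → ℝ | x ∈ Set.Icc (0 : Fin k → ℝ) (fun _ => b) ∧
                ∃ i, x i ≤ b - (2 * k + 1) * Real.log t / t},
              (∏ i, g (x i)) *
                ∫ s in {s : Fin k → ℝ | (∀ i, s i ∈ Set.Icc (0:ℝ) t) ∧ Monotone s},
                  Real.exp (lam0 * t + ∑ i, x i * (t - s i)))
          ≤ t ^ k * V0 * (∏ i, u i) * G ^ k *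
              ∫ x in {x : Fin k → ℝ | x ∈ Set.Icc (0 : Fin k → ℝ) (fun _ => b) ∧
                  ∃ i, x i ≤ b - (2 * k + 1) * Real.log t / t},
                Real.exp ((lam0 + ∑ i, x i) * t)) ∧
      Tendsto (fun t : ℝ =>
          (t ^ (2 * k) * Real.exp (-(lam0 + k * b) * t)) *
            (V0 * (∏ i, u i) *
              ∫ x in {x : Fin k → ℝ | x ∈ Set.Icc (0 : Fin k → ℝ) (fun _ => b) ∧
                  ∃ i, x i ≤ b - (2 * k + 1) * Real.log t / t},
                (∏ i, g (x i)) *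
                  ∫ s in {s : Fin k → ℝ | (∀ i, s i ∈ Set.Icc (0:ℝ) t) ∧ Monotone s},
                    Real.exp (lam0 * t + ∑ i, x i * (t - s i))))
        atTop (nhds 0) :=
  stmt_8_general k lam0 b V0 G hb hV0 hG u hu g hbdd
end

section
/- Let λ₀, γ, α, β, V₀, u₁ > 0 and t > 0 with z̄ > λ₀ t. For the model where mutations occur at rate V₀ u₁ e^{λ₀ s} with fitness increments having tail P(X > x) = x^β e^{-γ x^α}, the expected total number at time t of type-1 descendants of mutations whose growth-constant z(s,x) = (λ₀+x)(t-s) is at most z̄ satisfies the bound E[Σ_{z(s,x) ≤ z̄} Z₁^{s,x}(t)] ≤ C·V₀·u₁·z̄·e^{λ₀ t + z̄} for a constant C depending only on λ₀, γ, α, β. -/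
/-!
On the region `(λ₀ + y)(t - s) ≤ z̄` the two exponential factors multiply to at most
`e^{λ₀ t + z̄}`, so for each `s` the inner integral is at most `e^{λ₀ t + z̄}` times the total mass
`K = ∫₀^∞ y^β e^{-γ y^α} dy`, which is finite. Integrating over `s ∈ [0, t]` costs a factor `t`,
and `t < z̄ / λ₀`.
-/

open Real MeasureTheory Set

lemma intervalIntegral_le_mul_integral_Ioi {f φ : ℝ → ℝ} {a c : ℝ} (ha : 0 ≤ a) (hc : 0 ≤ c)
    (hφ : IntegrableOn φ (Ioi 0)) (hφ0 : ∀ y ∈ Ioi 0, 0 ≤ φ y)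
    (hf0 : ∀ y ∈ Ioc 0 a, 0 ≤ f y) (hfφ : ∀ y ∈ Ioc 0 a, f y ≤ c * φ y) :
    ∫ y in 0..a, f y ≤ c * ∫ y in Ioi 0, φ y := by
  rw [intervalIntegral.integral_of_le ha]
  calc ∫ y in Ioc 0 a, f y ≤ ∫ y in Ioc 0 a, c * φ y :=
        setIntegral_mono_of_nonneg hf0 hfφ ((hφ.mono_set Ioc_subset_Ioi_self).const_mul c)
    _ = c * ∫ y in Ioc 0 a, φ y := integral_const_mul c _
    _ ≤ c * ∫ y in Ioi 0, φ y := mul_le_mul_of_nonneg_left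
        (setIntegral_mono_set hφ (ae_restrict_of_forall_mem measurableSet_Ioi hφ0)
          Ioc_subset_Ioi_self.eventuallyLE) hc

lemma intervalIntegral_le_mul_sub_of_forall_mem_Ioo {f : ℝ → ℝ} {a b B : ℝ} (hab : a ≤ b)
    (hf0 : ∀ x ∈ Ioo a b, 0 ≤ f x) (hfB : ∀ x ∈ Ioo a b, f x ≤ B) :
    ∫ x in a..b, f x ≤ B * (b - a) := by
  rw [intervalIntegral.integral_of_le hab, integral_Ioc_eq_integral_Ioo]
  calc ∫ x in Ioo a b, f x ≤ ∫ _ in Ioo a b, B :=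
        setIntegral_mono_of_nonneg hf0 hfB (integrableOn_const measure_Ioo_lt_top.ne)
    _ = B * (b - a) := by simp [hab, mul_comm]

section MutantIntegral

variable {lam gam alpha beta s t y zbar : ℝ}

lemma exp_mul_mul_exp_le (hlam : 0 ≤ lam) (hst : s ≤ t) (hz : (lam + y) * (t - s) ≤ zbar) :
    exp (lam * s) * exp ((lam + y) * (t - s)) ≤ exp (lam * t + zbar) := by
  rw [← exp_add]
  exact exp_le_exp.mpr (by nlinarith)

lemma div_sub_sub_nonneg (hlam : 0 < lam) (hs : 0 ≤ s) (hst : s < t) (hz : lam * t < zbar) :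
    0 ≤ zbar / (t - s) - lam := by
  rw [sub_nonneg, le_div_iff₀ (sub_pos.mpr hst)]
  nlinarith

lemma integral_mutant_nonneg (hlam : 0 < lam) (hs : 0 ≤ s) (hst : s < t) (hz : lam * t < zbar) :
    0 ≤ ∫ y in (0:ℝ)..(zbar / (t - s) - lam),
      exp (lam * s) * y ^ beta * exp (-gam * y ^ alpha) * exp ((lam + y) * (t - s)) :=
  intervalIntegral.integral_nonneg (div_sub_sub_nonneg hlam hs hst hz) fun y hy => by
    have := hy.1
    positivity

lemma integral_mutant_le (hlam : 0 < lam) (hgam : 0 < gam) (halpha : 0 < alpha)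
    (hbeta : -1 < beta) (hs : 0 ≤ s) (hst : s < t) (hz : lam * t < zbar) :
    ∫ y in (0:ℝ)..(zbar / (t - s) - lam),
        exp (lam * s) * y ^ beta * exp (-gam * y ^ alpha) * exp ((lam + y) * (t - s))
      ≤ exp (lam * t + zbar) * ∫ y in Ioi 0, y ^ beta * exp (-gam * y ^ alpha) := by
  refine intervalIntegral_le_mul_integral_Ioi (div_sub_sub_nonneg hlam hs hst hz)
    (exp_pos _).le (integrableOn_rpow_mul_exp_neg_mul_rpow hbeta halpha hgam)
    (fun y hy => by have := mem_Ioi.mp hy; positivity)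
    (fun y hy => by have := hy.1; positivity) fun y hy => ?_
  have hy_le : (lam + y) * (t - s) ≤ zbar := by
    rw [← le_div_iff₀ (sub_pos.mpr hst)]
    linarith [hy.2]
  have := hy.1
  calc exp (lam * s) * y ^ beta * exp (-gam * y ^ alpha) * exp ((lam + y) * (t - s))
      = exp (lam * s) * exp ((lam + y) * (t - s)) * (y ^ beta * exp (-gam * y ^ alpha)) := by
        ring
    _ ≤ exp (lam * t + zbar) * (y ^ beta * exp (-gam * y ^ alpha)) := by
        gcongr
        exact exp_mul_mul_exp_le hlam.le hst.le hy_le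

end MutantIntegral

theorem stmt_14 (lam0 gam alpha beta : ℝ)
    (hlam0 : 0 < lam0) (hgam : 0 < gam) (halpha : 0 < alpha) (hbeta : 0 < beta) :
    ∃ C : ℝ, 0 < C ∧ ∀ V0 u1 t zbar : ℝ, 0 < V0 → 0 < u1 → 0 < t → lam0 * t < zbar →
      V0 * u1 * ∫ s in (0:ℝ)..t, ∫ y in (0:ℝ)..(zbar / (t - s) - lam0),
          Real.exp (lam0 * s) * y ^ beta * Real.exp (-gam * y ^ alpha) *
            Real.exp ((lam0 + y) * (t - s))
        ≤ C * V0 * u1 * zbar * Real.exp (lam0 * t + zbar) := by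
  set K := ∫ y in Ioi (0:ℝ), y ^ beta * exp (-gam * y ^ alpha)
  have hK : 0 ≤ K := setIntegral_nonneg measurableSet_Ioi fun y hy => by
    have := mem_Ioi.mp hy
    positivity
  refine ⟨(K + 1) / lam0, by positivity, fun V0 u1 t zbar hV0 hu1 ht hz => ?_⟩
  have houter := intervalIntegral_le_mul_sub_of_forall_mem_Ioo ht.le
    (fun s hs => integral_mutant_nonneg (gam := gam) (alpha := alpha) (beta := beta)
      hlam0 hs.1.le hs.2 hz)
    (fun s hs => integral_mutant_le hlam0 hgam halpha (by linarith) hs.1.le hs.2 hz)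
  have hKt : K * t ≤ (K + 1) / lam0 * zbar := by
    rw [div_mul_eq_mul_div, le_div_iff₀ hlam0]
    nlinarith
  calc V0 * u1 * ∫ s in (0:ℝ)..t, ∫ y in (0:ℝ)..(zbar / (t - s) - lam0),
        exp (lam0 * s) * y ^ beta * exp (-gam * y ^ alpha) * exp ((lam0 + y) * (t - s))
      ≤ V0 * u1 * (exp (lam0 * t + zbar) * K * (t - 0)) := by gcongr
    _ = V0 * u1 * exp (lam0 * t + zbar) * (K * t) := by ring
    _ ≤ V0 * u1 * exp (lam0 * t + zbar) * ((K + 1) / lam0 * zbar) := by gcongr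
    _ = (K + 1) / lam0 * V0 * u1 * zbar * exp (lam0 * t + zbar) := by ring
end
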